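/- Let S = ⟨n₁, …, n_k⟩ be a numerical monoid with minimal generators n₁ < n₂ < ⋯ < n_k. A nonzero element x ∈ S satisfies ρ(x) = n_k/n₁ if and only if x is an integer multiple of lcm(n₁, n_k). Moreover, for every rational number r < n_k/n₁ there are only finitely many x ∈ S with ρ(x) ≤ r. -/

import Mathlib

/-- The numerical monoid generated by `n 0, …, n (k-1)`. -/
def NumMon {k : ℕ} (n : Fin k → ℕ) : Set ℕ := {x | ∃ c : Fin k → ℕ, ∑ i, c i * n i = x}

/-- The generating set is minimal: no generator lies in the submonoid
generated by the remaining generators. -/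
def MinimalGens {k : ℕ} (n : Fin k → ℕ) : Prop :=
  ∀ i, ¬ ∃ c : Fin k → ℕ, c i = 0 ∧ ∑ j, c j * n j = n i

/-- The set of factorization lengths of `x`. -/
def GLenSet {k : ℕ} (n : Fin k → ℕ) (x : ℕ) : Set ℕ :=
  {l | ∃ c : Fin k → ℕ, ∑ i, c i * n i = x ∧ ∑ i, c i = l}

/-- Maximum factorization length. -/
noncomputable def GLmax {k : ℕ} (n : Fin k → ℕ) (x : ℕ) : ℕ := sSup (GLenSet n x)

/-- Minimum factorization length. -/
noncomputable def GLmin {k : ℕ} (n : Fin k → ℕ) (x : ℕ) : ℕ := sInf (GLenSet n x)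


/-! Write `a = n₁` and `b = n_k`. Every factorization length `l` of `x` satisfies
`l a ≤ x ≤ l b`, so `L(x) / ℓ(x) = b / a` forces `L(x) a = x = ℓ(x) b`, i.e. `a ∣ x` and
`b ∣ x`; conversely, if `a ∣ x` (resp. `b ∣ x`) then `x / a` (resp. `x / b`) is a length.
Trading `a` copies of a generator `n_j` for `n_j` copies of `a` (resp. of `b`) gives
factorizations using every other generator fewer than `a` (resp. `b`) times, whence
`x ≤ L(x) a + O(1)` and `ℓ(x) b ≤ x + O(1)`. So `ρ(x) ≤ r < b / a` bounds `x`. -/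

section NumMon

variable {k : ℕ} {n : Fin k → ℕ} {x l : ℕ} {i₀ i₁ : Fin k}

lemma GLenSet_nonempty (hx : x ∈ NumMon n) : (GLenSet n x).Nonempty := by
  obtain ⟨c, hc⟩ := hx
  exact ⟨∑ i, c i, c, hc, rfl⟩

lemma eq_zero_of_zero_mem_GLenSet (h : 0 ∈ GLenSet n x) : x = 0 := by
  obtain ⟨c, hc, hc0⟩ := h
  simp_all [Finset.sum_eq_zero_iff]

lemma div_mem_GLenSet (t : Fin k) (h : n t ∣ x) : x / n t ∈ GLenSet n x := by
  refine ⟨Pi.single t (x / n t), ?_, ?_⟩ <;> simp [Pi.single_apply, Nat.div_mul_cancel h]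

lemma mul_le_of_mem_GLenSet {m : ℕ} (hm : ∀ i, m ≤ n i) (hl : l ∈ GLenSet n x) :
    l * m ≤ x := by
  obtain ⟨c, rfl, rfl⟩ := hl
  rw [Finset.sum_mul]
  exact Finset.sum_le_sum fun i _ => Nat.mul_le_mul_left _ (hm i)

lemma le_mul_of_mem_GLenSet {M : ℕ} (hM : ∀ i, n i ≤ M) (hl : l ∈ GLenSet n x) :
    x ≤ l * M := by
  obtain ⟨c, rfl, rfl⟩ := hl
  rw [Finset.sum_mul]
  exact Finset.sum_le_sum fun i _ => Nat.mul_le_mul_left _ (hM i)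

lemma bddAbove_GLenSet (hpos : ∀ i, 0 < n i) : BddAbove (GLenSet n x) :=
  ⟨x, fun l hl => by simpa using mul_le_of_mem_GLenSet (m := 1) hpos hl⟩

lemma GLmax_mem (hpos : ∀ i, 0 < n i) (hx : x ∈ NumMon n) : GLmax n x ∈ GLenSet n x :=
  Nat.sSup_mem (GLenSet_nonempty hx) (bddAbove_GLenSet hpos)

lemma le_GLmax (hpos : ∀ i, 0 < n i) (hl : l ∈ GLenSet n x) : l ≤ GLmax n x :=
  le_csSup (bddAbove_GLenSet hpos) hl

lemma GLmin_mem (hx : x ∈ NumMon n) : GLmin n x ∈ GLenSet n x :=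
  Nat.sInf_mem (GLenSet_nonempty hx)

lemma GLmin_le (hl : l ∈ GLenSet n x) : GLmin n x ≤ l :=
  Nat.sInf_le hl

lemma GLmin_pos (hx : x ∈ NumMon n) (hx0 : x ≠ 0) : 0 < GLmin n x :=
  Nat.pos_of_ne_zero fun h => hx0 (eq_zero_of_zero_mem_GLenSet (h ▸ GLmin_mem hx))

lemma exists_factorization_lt (t : Fin k) (ht : 0 < n t) (hx : x ∈ NumMon n) :
    ∃ c : Fin k → ℕ, ∑ i, c i * n i = x ∧ ∀ j ≠ t, c j < n t := by
  obtain ⟨c, rfl⟩ := hx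
  refine ⟨fun j => c j % n t + if j = t then ∑ i, c i / n t * n i else 0, ?_, ?_⟩
  · simp only [add_mul, Finset.sum_add_distrib, ite_mul, zero_mul, Finset.sum_ite_eq',
      Finset.mem_univ, if_true]
    rw [Finset.sum_mul, ← Finset.sum_add_distrib]
    refine Finset.sum_congr rfl fun j _ => ?_
    calc c j % n t * n j + c j / n t * n j * n t
        = (c j % n t + n t * (c j / n t)) * n j := by ring
      _ = c j * n j := by rw [Nat.mod_add_div]
  · intro j hj
    simpa [hj] using Nat.mod_lt (c j) ht

lemma GLmax_mul_le (hpos : ∀ i, 0 < n i) (hmin : ∀ i, n i₀ ≤ n i) (hx : x ∈ NumMon n) :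
    GLmax n x * n i₀ ≤ x :=
  mul_le_of_mem_GLenSet hmin (GLmax_mem hpos hx)

lemma le_GLmin_mul (hmax : ∀ i, n i ≤ n i₁) (hx : x ∈ NumMon n) :
    x ≤ GLmin n x * n i₁ :=
  le_mul_of_mem_GLenSet hmax (GLmin_mem hx)

lemma GLmax_mul_eq_iff (hpos : ∀ i, 0 < n i) (hmin : ∀ i, n i₀ ≤ n i) (hx : x ∈ NumMon n) :
    GLmax n x * n i₀ = x ↔ n i₀ ∣ x := by
  refine ⟨fun h => Dvd.intro_left _ h, fun h => ?_⟩
  have hdiv : x / n i₀ ≤ GLmax n x := le_GLmax hpos (div_mem_GLenSet i₀ h)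
  have : x ≤ GLmax n x * n i₀ := by
    simpa [Nat.div_mul_cancel h] using Nat.mul_le_mul_right (n i₀) hdiv
  exact le_antisymm (GLmax_mul_le hpos hmin hx) this

lemma GLmin_mul_eq_iff (hmax : ∀ i, n i ≤ n i₁) (hx : x ∈ NumMon n) :
    GLmin n x * n i₁ = x ↔ n i₁ ∣ x := by
  refine ⟨fun h => Dvd.intro_left _ h, fun h => ?_⟩
  have hdiv : GLmin n x ≤ x / n i₁ := GLmin_le (div_mem_GLenSet i₁ h)
  have : GLmin n x * n i₁ ≤ x := by
    simpa [Nat.div_mul_cancel h] using Nat.mul_le_mul_right (n i₁) hdiv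
  exact le_antisymm this (le_GLmin_mul hmax hx)

lemma GLmax_mul_eq_GLmin_mul_iff (hpos : ∀ i, 0 < n i) (hmin : ∀ i, n i₀ ≤ n i)
    (hmax : ∀ i, n i ≤ n i₁) (hx : x ∈ NumMon n) :
    GLmax n x * n i₀ = GLmin n x * n i₁ ↔ Nat.lcm (n i₀) (n i₁) ∣ x := by
  have h₀ := GLmax_mul_le hpos hmin hx
  have h₁ := le_GLmin_mul hmax hx
  rw [Nat.lcm_dvd_iff, ← GLmax_mul_eq_iff hpos hmin hx, ← GLmin_mul_eq_iff hmax hx]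
  omega

lemma le_GLmax_mul_add (hpos : ∀ i, 0 < n i) (hmin : ∀ i, n i₀ ≤ n i)
    (hmax : ∀ i, n i ≤ n i₁) (hx : x ∈ NumMon n) :
    x ≤ GLmax n x * n i₀ + k * (n i₀ * n i₁) := by
  obtain ⟨c, hc, hlt⟩ := exists_factorization_lt i₀ (hpos i₀) hx
  have hterm : ∀ j, c j * n j ≤ c j * n i₀ + n i₀ * n i₁ := by
    intro j
    by_cases hj : j = i₀
    · subst hj; omega
    · exact le_add_left (Nat.mul_le_mul (hlt j hj).le (hmax j))
  calc x = ∑ j, c j * n j := hc.symm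
    _ ≤ ∑ j, (c j * n i₀ + n i₀ * n i₁) := Finset.sum_le_sum fun j _ => hterm j
    _ = (∑ j, c j) * n i₀ + k * (n i₀ * n i₁) := by
        simp [Finset.sum_add_distrib, Finset.sum_mul]
    _ ≤ GLmax n x * n i₀ + k * (n i₀ * n i₁) := by
        gcongr
        exact le_GLmax hpos ⟨c, hc, rfl⟩

lemma GLmin_mul_le_add (hpos : ∀ i, 0 < n i) (hmax : ∀ i, n i ≤ n i₁) (hx : x ∈ NumMon n) :
    GLmin n x * n i₁ ≤ x + k * (n i₁ * n i₁) := by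
  obtain ⟨c, hc, hlt⟩ := exists_factorization_lt i₁ (hpos i₁) hx
  have hterm : ∀ j, c j * n i₁ ≤ c j * n j + n i₁ * n i₁ := by
    intro j
    by_cases hj : j = i₁
    · subst hj; omega
    · exact le_add_left (Nat.mul_le_mul_right _ (hlt j hj).le)
  calc GLmin n x * n i₁ ≤ (∑ j, c j) * n i₁ := by
        gcongr
        exact GLmin_le ⟨c, hc, rfl⟩
    _ = ∑ j, c j * n i₁ := Finset.sum_mul _ _ _
    _ ≤ ∑ j, (c j * n j + n i₁ * n i₁) := Finset.sum_le_sum fun j _ => hterm j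
    _ = x + k * (n i₁ * n i₁) := by simp [Finset.sum_add_distrib, hc]

lemma finite_setOf_ratio_le (hpos : ∀ i, 0 < n i) (hmin : ∀ i, n i₀ ≤ n i)
    (hmax : ∀ i, n i ≤ n i₁) {r : ℝ} (hr : r * n i₀ < n i₁) :
    {x : ℕ | x ∈ NumMon n ∧ x ≠ 0 ∧ (GLmax n x : ℝ) / (GLmin n x : ℝ) ≤ r}.Finite := by
  set a : ℝ := (n i₀ : ℝ)
  set b : ℝ := (n i₁ : ℝ)
  set A : ℝ := k * (a * b)
  set B : ℝ := k * (b * b)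
  obtain ⟨N, hN⟩ := exists_nat_gt ((r * a * B + A * b) / (b - r * a))
  refine (Set.finite_Iio N).subset fun x ⟨hx, hx0, hρ⟩ => ?_
  have hℓ : (0 : ℝ) < GLmin n x := by exact_mod_cast GLmin_pos hx hx0
  have hLr : (GLmax n x : ℝ) ≤ r * GLmin n x := (div_le_iff₀ hℓ).mp hρ
  have hr0 : 0 ≤ r := (div_nonneg (Nat.cast_nonneg _) hℓ.le).trans hρ
  have hL : (x : ℝ) ≤ GLmax n x * a + A := by
    simp only [a, b, A]
    exact_mod_cast le_GLmax_mul_add hpos hmin hmax hx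
  have hℓb : (GLmin n x : ℝ) * b ≤ x + B := by
    simp only [b, B]
    exact_mod_cast GLmin_mul_le_add hpos hmax hx
  have key : (x : ℝ) * (b - r * a) ≤ r * a * B + A * b := by
    have h₁ := mul_le_mul_of_nonneg_right hL (by positivity : (0 : ℝ) ≤ b)
    have h₂ := mul_le_mul_of_nonneg_right hLr (by positivity : (0 : ℝ) ≤ a * b)
    have h₃ := mul_le_mul_of_nonneg_left hℓb (by positivity : 0 ≤ r * a)
    linarith
  have hx : (x : ℝ) < N := ((le_div_iff₀ (by linarith)).mpr key).trans_lt hN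
  exact_mod_cast hx

end NumMon

theorem numerical_monoid_elasticity_fine {k : ℕ} (hk : 0 < k)
    (n : Fin k → ℕ) (hpos : ∀ i, 0 < n i) (hmono : StrictMono n) :
    (∀ x ∈ NumMon n, x ≠ 0 →
      ((GLmax n x : ℝ) / (GLmin n x : ℝ) = (n ⟨k - 1, by omega⟩ : ℝ) / (n ⟨0, hk⟩ : ℝ) ↔
        Nat.lcm (n ⟨0, hk⟩) (n ⟨k - 1, by omega⟩) ∣ x)) ∧
    (∀ r : ℚ, (r : ℝ) < (n ⟨k - 1, by omega⟩ : ℝ) / (n ⟨0, hk⟩ : ℝ) →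
      {x : ℕ | x ∈ NumMon n ∧ x ≠ 0 ∧ (GLmax n x : ℝ) / (GLmin n x : ℝ) ≤ (r : ℝ)}.Finite) := by
  have hmin : ∀ i, n ⟨0, hk⟩ ≤ n i := fun i => hmono.monotone (Nat.zero_le _)
  have hmax : ∀ i, n i ≤ n ⟨k - 1, by omega⟩ := fun i =>
    hmono.monotone (Fin.le_def.mpr (by simp only; omega))
  have ha : (0 : ℝ) < n ⟨0, hk⟩ := by exact_mod_cast hpos _
  refine ⟨fun x hx hx0 => ?_, fun r hr => ?_⟩
  · have hℓ : (0 : ℝ) < GLmin n x := by exact_mod_cast GLmin_pos hx hx0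
    rw [div_eq_div_iff hℓ.ne' ha.ne', mul_comm _ (GLmin n x : ℝ),
      ← GLmax_mul_eq_GLmin_mul_iff hpos hmin hmax hx]
    exact_mod_cast Iff.rfl
  · exact finite_setOf_ratio_le hpos hmin hmax ((lt_div_iff₀ ha).mp hr)
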